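/- Let Ω be a locally compact, second countable Hausdorff topological space with its Borel σ-algebra, and let E be a POM on Borel(Ω) with values in the bounded operators on a complex separable Hilbert space H. Then E has the norm-1-property if and only if ‖E(K)‖ = 1 for every compact set K ⊆ Ω with E(K) ≠ 0. -/

import Mathlib

open MeasureTheory ContinuousLinearMap
open scoped InnerProductSpace

/-- Auxiliary sequence: `A`, then `B`, then empty sets. -/
private def pomPairSeq {Ω : Type*} (A B : Set Ω) : ℕ → Set Ω
  | 0 => A
  | 1 => B
  | _ + 2 => ∅

/-- a POM on a locally compact second countable Hausdorff space has
the norm-1-property iff `‖E K‖ = 1` for every compact `K` with `E K ≠ 0`. -/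
theorem pom_norm_one_iff_norm_one_on_compacts
    {Ω : Type*} [TopologicalSpace Ω] [LocallyCompactSpace Ω]
    [SecondCountableTopology Ω] [T2Space Ω] [MeasurableSpace Ω] [BorelSpace Ω]
    {H : Type*} [NormedAddCommGroup H] [InnerProductSpace ℂ H] [CompleteSpace H]
    [TopologicalSpace.SeparableSpace H]
    (E : Set Ω → (H →L[ℂ] H))
    (hpos : ∀ X : Set Ω, MeasurableSet X → 0 ≤ E X)
    (hbdd : ∀ X : Set Ω, MeasurableSet X → E X ≤ 1)
    (huniv : E Set.univ = 1)
    (hadd : ∀ (φ : H) (X : ℕ → Set Ω), (∀ i, MeasurableSet (X i)) →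
      Pairwise (Function.onFun Disjoint X) →
      HasSum (fun i => ⟪φ, E (X i) φ⟫_ℂ) ⟪φ, E (⋃ i, X i) φ⟫_ℂ) :
    (∀ X : Set Ω, MeasurableSet X → E X ≠ 0 → ‖E X‖ = 1) ↔
      (∀ K : Set Ω, IsCompact K → E K ≠ 0 → ‖E K‖ = 1) := by
  constructor
  · intro h K hK hne
    exact h K hK.isClosed.measurableSet hne
  intro h X hX hne
  -- the quadratic form of `E ∅` vanishes
  have hempty : ∀ φ : H, ⟪φ, E ∅ φ⟫_ℂ = 0 := by
    intro φ
    have h0 := hadd φ (fun _ => ∅) (fun _ => MeasurableSet.empty)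
      (fun i j hij => by simp [Function.onFun])
    simp only [Set.iUnion_empty] at h0
    have h1 : Filter.Tendsto (fun _ : ℕ => ⟪φ, E ∅ φ⟫_ℂ) Filter.atTop (nhds 0) :=
      h0.summable.tendsto_atTop_zero
    exact tendsto_nhds_unique tendsto_const_nhds h1
  -- additivity for a pair of disjoint measurable sets
  have hpair : ∀ (A B : Set Ω), MeasurableSet A → MeasurableSet B → Disjoint A B →
      ∀ φ : H, ⟪φ, E (A ∪ B) φ⟫_ℂ = ⟪φ, E A φ⟫_ℂ + ⟪φ, E B φ⟫_ℂ := by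
    intro A B hA hB hAB φ
    have hmeas : ∀ i, MeasurableSet (pomPairSeq A B i) := by
      intro i
      rcases i with _ | _ | i
      · exact hA
      · exact hB
      · exact MeasurableSet.empty
    have hdisj : Pairwise (Function.onFun Disjoint (pomPairSeq A B)) := by
      intro i j hij
      rcases i with _ | _ | i <;> rcases j with _ | _ | j <;>
        simp_all [Function.onFun, pomPairSeq, hAB, hAB.symm]
    have hU : (⋃ i, pomPairSeq A B i) = A ∪ B := by
      apply Set.Subset.antisymm
      · refine Set.iUnion_subset fun i => ?_
        rcases i with _ | _ | i <;> simp [pomPairSeq]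
      · refine Set.union_subset ?_ ?_
        · exact Set.subset_iUnion_of_subset 0 (by simp [pomPairSeq])
        · exact Set.subset_iUnion_of_subset 1 (by simp [pomPairSeq])
    have hsum := hadd φ (pomPairSeq A B) hmeas hdisj
    rw [hU] at hsum
    have hzero : ∀ i ∉ ({0, 1} : Finset ℕ), ⟪φ, E (pomPairSeq A B i) φ⟫_ℂ = 0 := by
      intro i hi
      rcases i with _ | _ | i
      · simp at hi
      · simp at hi
      · exact hempty φ
    have hsum2 : HasSum (fun i => ⟪φ, E (pomPairSeq A B i) φ⟫_ℂ)
        (∑ i ∈ ({0, 1} : Finset ℕ), ⟪φ, E (pomPairSeq A B i) φ⟫_ℂ) :=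
      hasSum_sum_of_ne_finset_zero hzero
    have heq := hsum.unique hsum2
    rw [heq, Finset.sum_pair (by norm_num)]
    rfl
  -- real and nonnegative quadratic forms
  have hform : ∀ Y : Set Ω, MeasurableSet Y → ∀ φ : H,
      (((⟪φ, E Y φ⟫_ℂ).re : ℂ) = ⟪φ, E Y φ⟫_ℂ ∧ 0 ≤ (⟪φ, E Y φ⟫_ℂ).re) := by
    intro Y hY φ
    have hP : (E Y).IsPositive := ((E Y).nonneg_iff_isPositive).mp (hpos Y hY)
    have h1 := ((E Y).isPositive_iff_complex).mp hP φ
    simp only [RCLike.re_to_complex] at h1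
    have hconj : ⟪φ, E Y φ⟫_ℂ = (starRingEnd ℂ) ⟪E Y φ, φ⟫_ℂ := (inner_conj_symm _ _).symm
    constructor
    · rw [hconj, ← h1.1]
      simp
    · rw [hconj, Complex.conj_re]
      exact h1.2
  -- find a vector whose quadratic form against `E X` is positive
  obtain ⟨φ, hφ⟩ : ∃ φ : H, ⟪E X φ, φ⟫_ℂ ≠ 0 := by
    by_contra hcon
    push_neg at hcon
    apply hne
    have := (inner_map_self_eq_zero ((E X : H →L[ℂ] H) : H →ₗ[ℂ] H)).mp (fun x => hcon x)
    exact ContinuousLinearMap.coe_injective (this.trans ContinuousLinearMap.coe_zero.symm)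
  have hφ' : 0 < (⟪φ, E X φ⟫_ℂ).re := by
    have h1 := hform X hX φ
    rcases lt_or_eq_of_le h1.2 with hlt | heq
    · exact hlt
    · exfalso
      apply hφ
      have h2 : ⟪φ, E X φ⟫_ℂ = 0 := by rw [← h1.1, ← heq]; simp
      rw [← inner_conj_symm (E X φ) φ, h2, map_zero]
  -- build the finite Borel measure `Y ↦ re ⟪φ, E Y φ⟫`
  let μ : Measure Ω := Measure.ofMeasurable
    (fun s _ => ENNReal.ofReal (⟪φ, E s φ⟫_ℂ).re)
    (by simp [hempty φ])
    (by
      intro f hf hd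
      have hs := hadd φ f hf hd
      have hre := Complex.hasSum_re hs
      show ENNReal.ofReal (⟪φ, E (⋃ i, f i) φ⟫_ℂ).re
          = ∑' i, ENNReal.ofReal (⟪φ, E (f i) φ⟫_ℂ).re
      rw [← hre.tsum_eq,
        ENNReal.ofReal_tsum_of_nonneg (fun i => (hform (f i) (hf i) φ).2) hre.summable])
  have hμ : ∀ s : Set Ω, MeasurableSet s → μ s = ENNReal.ofReal (⟪φ, E s φ⟫_ℂ).re :=
    fun s hs => Measure.ofMeasurable_apply s hs
  haveI : IsFiniteMeasure μ :=
    ⟨by rw [hμ _ MeasurableSet.univ]; exact ENNReal.ofReal_lt_top⟩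
  -- inner regularity gives a compact subset of positive measure
  have hμX : 0 < μ X := by
    rw [hμ X hX]
    exact ENNReal.ofReal_pos.mpr hφ'
  obtain ⟨K, hKX, hKc, hKpos⟩ := hX.exists_lt_isCompact (μ := μ) hμX
  have hKm : MeasurableSet K := hKc.isClosed.measurableSet
  -- `E K ≠ 0`
  have hEK : E K ≠ 0 := by
    intro h0
    rw [hμ K hKm, h0] at hKpos
    simp only [ContinuousLinearMap.zero_apply, inner_zero_right, Complex.zero_re,
      ENNReal.ofReal_zero, lt_self_iff_false] at hKpos
  -- `E K ≤ E X`
  have hdiff : MeasurableSet (X \ K) := hX.diff hKm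
  have hle : E K ≤ E X := by
    rw [le_def, isPositive_iff_complex]
    intro x
    have hq : ⟪(E X - E K) x, x⟫_ℂ = ⟪E (X \ K) x, x⟫_ℂ := by
      have hp := hpair K (X \ K) hKm hdiff Set.disjoint_sdiff_right x
      rw [Set.union_diff_cancel hKX] at hp
      have hsub : ⟪x, E X x⟫_ℂ - ⟪x, E K x⟫_ℂ = ⟪x, E (X \ K) x⟫_ℂ := by
        rw [hp]; ring
      have e1 : ⟪(E X - E K) x, x⟫_ℂ = ⟪E X x, x⟫_ℂ - ⟪E K x, x⟫_ℂ := by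
        rw [ContinuousLinearMap.sub_apply, inner_sub_left]
      have e2 : ⟪E X x, x⟫_ℂ = (starRingEnd ℂ) ⟪x, E X x⟫_ℂ := (inner_conj_symm _ _).symm
      have e3 : ⟪E K x, x⟫_ℂ = (starRingEnd ℂ) ⟪x, E K x⟫_ℂ := (inner_conj_symm _ _).symm
      have e4 : ⟪E (X \ K) x, x⟫_ℂ = (starRingEnd ℂ) ⟪x, E (X \ K) x⟫_ℂ :=
        (inner_conj_symm _ _).symm
      rw [e1, e2, e3, e4, ← map_sub, hsub]
    rw [hq]
    exact (isPositive_iff_complex _).mp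
      (((E (X \ K)).nonneg_iff_isPositive).mp (hpos _ hdiff)) x
  -- conclude
  have h1 : ‖E K‖ = 1 := h K hKc hEK
  have h2 : ‖E K‖ ≤ ‖E X‖ :=
    CStarAlgebra.norm_le_norm_of_nonneg_of_le (hpos K hKm) hle
  have h3 : ‖E X‖ ≤ 1 :=
    (CStarAlgebra.norm_le_one_iff_of_nonneg (E X) (hpos X hX)).mpr (hbdd X hX)
  linarith
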